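/- Boundary-layer behavior of the splitting probability near λ = 1: for every fixed real number X, the sequence Sp( 1 + X/log(n), n ) converges to 1/(1 + e^{2X}) as the natural number n tends to infinity (n ≥ 2 so that log n > 0). In particular the transition region of the splitting probability around λ = 1 has width of order 1/log(n). -/

import Mathlib

open MeasureTheory Filter

/-- The splitting probability integral
`Sp(λ, n) = π^(-1/2) ∫_0^∞ exp(-π^(-1/2) (w + λ n^(1 - 1/λ²) w^(1/λ²))) dw`. -/
noncomputable def Sp (l : ℝ) (n : ℕ) : ℝ :=
  (Real.sqrt Real.pi)⁻¹ *
    ∫ w in Set.Ioi (0 : ℝ),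
      Real.exp (-(Real.sqrt Real.pi)⁻¹ *
        (w + l * (n : ℝ) ^ (1 - 1 / l ^ 2) * w ^ (1 / l ^ 2)))

/-!
At `λ = 1 + X / log n` the coefficient `λ n^(1 - 1/λ²) = λ exp((1 - 1/λ²) log n)` tends to
`e^(2X)`, because `1 - 1/λ² ≈ 2X / log n`, while the exponent `1/λ²` of `w` tends to `1`.
By dominated convergence (the integrand is bounded by `exp(-w/√π)`) the integral tends to
`∫_0^∞ exp(-(1 + e^(2X)) w / √π) dw = √π / (1 + e^(2X))`.
-/

open Real Set Topology

theorem setIntegral_exp_neg_mul_Ioi_zero {b : ℝ} (hb : 0 < b) :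
    ∫ w in Ioi (0 : ℝ), exp (-b * w) = b⁻¹ := by
  rw [integral_exp_mul_Ioi (neg_lt_zero.2 hb), mul_zero, exp_zero, neg_div_neg_eq, one_div]

theorem tendsto_setIntegral_exp_neg_mul_add_mul_rpow {ι : Type*} {L : Filter ι}
    [L.IsCountablyGenerated] {c a₀ q₀ : ℝ} {a q : ι → ℝ} (hc : 0 < c)
    (ha : Tendsto a L (𝓝 a₀)) (hq : Tendsto q L (𝓝 q₀)) (ha_nonneg : ∀ᶠ i in L, 0 ≤ a i) :
    Tendsto (fun i => ∫ w in Ioi (0 : ℝ), exp (-c * (w + a i * w ^ q i))) L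
      (𝓝 (∫ w in Ioi (0 : ℝ), exp (-c * (w + a₀ * w ^ q₀)))) := by
  refine tendsto_integral_filter_of_dominated_convergence (fun w => exp (-c * w))
    (Eventually.of_forall fun i => ?_) ?_ (exp_neg_integrableOn_Ioi 0 hc) ?_
  · exact (ContinuousOn.rexp <| continuousOn_const.mul <| continuousOn_id.add <|
      continuousOn_const.mul <| continuousOn_id.rpow_const fun w hw => Or.inl (ne_of_gt hw)
      ).aestronglyMeasurable measurableSet_Ioi
  · filter_upwards [ha_nonneg] with i hai
    refine (ae_restrict_iff' measurableSet_Ioi).2 (Eventually.of_forall fun w (hw : 0 < w) => ?_)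
    have hterm : 0 ≤ a i * w ^ q i := mul_nonneg hai (rpow_nonneg hw.le _)
    rw [norm_of_nonneg (exp_nonneg _), exp_le_exp]
    nlinarith
  · refine (ae_restrict_iff' measurableSet_Ioi).2 (Eventually.of_forall fun w (hw : 0 < w) => ?_)
    have hpow : Tendsto (fun i => w ^ q i) L (𝓝 (w ^ q₀)) :=
      tendsto_const_nhds.rpow hq (Or.inl hw.ne')
    exact (tendsto_const_nhds.mul (tendsto_const_nhds.add (ha.mul hpow))).rexp

theorem tendsto_one_sub_inv_one_add_div_sq_mul (X : ℝ) :
    Tendsto (fun t : ℝ => (1 - 1 / (1 + X / t) ^ 2) * t) atTop (𝓝 (2 * X)) := by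
  have hε : Tendsto (fun t : ℝ => X / t) atTop (𝓝 0) := tendsto_id.const_div_atTop X
  have hlim : Tendsto (fun t : ℝ => X * (2 + X / t) / (1 + X / t) ^ 2) atTop
      (𝓝 (X * (2 + 0) / (1 + 0) ^ 2)) :=
    (tendsto_const_nhds.mul (tendsto_const_nhds.add hε)).div
      ((tendsto_const_nhds.add hε).pow 2) (by norm_num)
  rw [show X * (2 + 0) / (1 + 0) ^ 2 = 2 * X by ring] at hlim
  refine hlim.congr' ?_
  filter_upwards [hε.eventually (eventually_gt_nhds (by norm_num : (-1 : ℝ) < 0)),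
    eventually_gt_atTop 0] with t hε ht
  have hden : 1 + X / t ≠ 0 := by linarith
  have hmul : X / t * t = X := div_mul_cancel₀ X ht.ne'
  rw [one_sub_div (pow_ne_zero 2 hden), div_mul_eq_mul_div]
  congr 1
  linear_combination (-(2 + X / t)) * hmul

theorem tendsto_natCast_rpow_one_sub_inv_one_add_div_log_sq (X : ℝ) :
    Tendsto (fun n : ℕ => (n : ℝ) ^ (1 - 1 / (1 + X / log n) ^ 2)) atTop (𝓝 (exp (2 * X))) := by
  have hlog : Tendsto (fun n : ℕ => log n) atTop atTop :=
    tendsto_log_atTop.comp tendsto_natCast_atTop_atTop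
  refine ((tendsto_one_sub_inv_one_add_div_sq_mul X).comp hlog).rexp.congr' ?_
  filter_upwards [eventually_gt_atTop 0] with n hn
  rw [rpow_def_of_pos (Nat.cast_pos.2 hn), mul_comm, Function.comp_apply]

/-- Boundary-layer behavior near `λ = 1`: for every fixed `X ∈ ℝ`,
`Sp(1 + X / log n, n) → 1 / (1 + e^(2X))` as `n → ∞`, so the transition region of the
splitting probability around `λ = 1` has width of order `1 / log n`. -/
theorem stmt11 (X : ℝ) :
    Tendsto (fun n : ℕ => Sp (1 + X / Real.log n) n) atTop
      (nhds (1 / (1 + Real.exp (2 * X)))) := by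
  set c : ℝ := (√π)⁻¹
  have hc : 0 < c := inv_pos.2 (sqrt_pos.2 pi_pos)
  have hl : Tendsto (fun n : ℕ => 1 + X / log n) atTop (𝓝 1) := by
    simpa using ((tendsto_log_atTop.comp tendsto_natCast_atTop_atTop).const_div_atTop X).const_add 1
  have hcoef := hl.mul (tendsto_natCast_rpow_one_sub_inv_one_add_div_log_sq X)
  have hexponent : Tendsto (fun n : ℕ => 1 / (1 + X / log n) ^ 2) atTop (𝓝 1) := by
    simpa using (hl.pow 2).inv₀ (by norm_num)
  have hcoef_nonneg : ∀ᶠ n : ℕ in atTop,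
      0 ≤ (1 + X / log n) * (n : ℝ) ^ (1 - 1 / (1 + X / log n) ^ 2) := by
    filter_upwards [hl.eventually (eventually_gt_nhds one_pos)] with n hn
    exact mul_nonneg hn.le (rpow_nonneg n.cast_nonneg _)
  have hint := (tendsto_setIntegral_exp_neg_mul_add_mul_rpow hc hcoef hexponent
    hcoef_nonneg).const_mul c
  simp_rw [one_mul, rpow_one, show ∀ w : ℝ, -c * (w + exp (2 * X) * w) =
    -(c * (1 + exp (2 * X))) * w from fun w => by ring] at hint
  rw [setIntegral_exp_neg_mul_Ioi_zero (by positivity), mul_inv, ← mul_assoc,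
    mul_inv_cancel₀ hc.ne', one_mul, ← one_div] at hint
  exact hint
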